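/- Let d be a prime, n ≥ 1, ψ : (Fin n → ZMod d) → ℂ, and A ⊆ Fin n a subset of the sites with complement B. Let M_A(ψ) be the complex matrix indexed by pairs (a : A → ZMod d, b : B → ZMod d) whose (a,b) entry is ψ of the function that restricts to a on A and to b on B. Then the Schmidt rank of ψ is bounded below by the rank of this bipartite reshaping: Matrix.rank (M_A(ψ)) ≤ r(ψ). -/

import Mathlib

/-!
A decomposition `ψ x = ∑ i < R, ∏ j, f i j (x j)` splits each product into a factor depending
only on the sites in `A` and one depending only on the sites outside `A`, so the reshaping
`M_A(ψ)` factors as a product of an `(A-configurations) × R` and an `R × (Aᶜ-configurations)`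
matrix and has rank at most `R`. For `n ≥ 1` some decomposition exists (one term per
configuration), so the infimum defining the Schmidt rank is attained.
-/

/-- The Schmidt rank of `ψ : (Fin n → ZMod d) → ℂ`: the least `R` such that `ψ` is a
sum of `R` product functions. -/
noncomputable def schmidtRank {d n : ℕ} (ψ : (Fin n → ZMod d) → ℂ) : ℕ :=
  sInf {R : ℕ | ∃ f : Fin R → Fin n → ZMod d → ℂ, ∀ x, ψ x = ∑ i, ∏ j, f i j (x j)}

section Reshaping

variable {ι α M : Type*} [Fintype ι] [DecidableEq ι]

def glue (A : Finset ι) (a : A → α) (b : ↥Aᶜ → α) : ι → α :=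
  fun j => if h : j ∈ A then a ⟨j, h⟩ else b ⟨j, Finset.mem_compl.mpr h⟩

def bipartiteReshaping (A : Finset ι) (ψ : (ι → α) → M) : Matrix (A → α) (↥Aᶜ → α) M :=
  Matrix.of fun a b => ψ (glue A a b)

lemma prod_glue [CommMonoid M] (A : Finset ι) (g : ι → α → M) (a : A → α) (b : ↥Aᶜ → α) :
    ∏ j, g j (glue A a b j) = (∏ j : A, g j (a j)) * ∏ j : ↥Aᶜ, g j (b j) := by
  have ha : ∀ j : A, glue A a b j = a j := fun j => dif_pos j.2
  have hb : ∀ j : ↥Aᶜ, glue A a b j = b j := fun j => dif_neg (Finset.mem_compl.mp j.2)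
  rw [← Finset.prod_mul_prod_compl A, ← Finset.prod_coe_sort A, ← Finset.prod_coe_sort Aᶜ]
  simp only [ha, hb]

variable {R : ℕ}

lemma bipartiteReshaping_eq_mul [CommSemiring M] (A : Finset ι) {ψ : (ι → α) → M}
    {f : Fin R → ι → α → M} (hf : ∀ x, ψ x = ∑ i, ∏ j, f i j (x j)) :
    bipartiteReshaping A ψ =
      (Matrix.of fun a i => ∏ j : A, f i j (a j)) * Matrix.of fun i b => ∏ j : ↥Aᶜ, f i j (b j) := by
  ext a b
  simp only [bipartiteReshaping, Matrix.mul_apply, Matrix.of_apply, hf, prod_glue]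

lemma rank_bipartiteReshaping_le [Fintype α] [CommSemiring M] [StrongRankCondition M]
    (A : Finset ι) {ψ : (ι → α) → M} {f : Fin R → ι → α → M}
    (hf : ∀ x, ψ x = ∑ i, ∏ j, f i j (x j)) : (bipartiteReshaping A ψ).rank ≤ R := by
  rw [bipartiteReshaping_eq_mul A hf]
  calc _ ≤ _ := Matrix.rank_mul_le_left _ _
    _ ≤ Fintype.card (Fin R) := Matrix.rank_le_card_width _
    _ = R := Fintype.card_fin R

end Reshaping

/-- The term for the configuration `y` is the indicator of `y`, with the value `ψ y` placed
in the factor at the site `j₀`. -/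
lemma exists_sum_prod_eq {ι α M : Type*} [Fintype ι] [DecidableEq ι] [Fintype α]
    [DecidableEq α] [CommSemiring M] (j₀ : ι) (ψ : (ι → α) → M) :
    ∃ g : (ι → α) → ι → α → M, ∀ x, ψ x = ∑ y, ∏ j, g y j (x j) := by
  refine ⟨fun y j t => (if t = y j then 1 else 0) * (if j = j₀ then ψ y else 1), fun x => ?_⟩
  simp only [Finset.prod_mul_distrib, Fintype.prod_boole, Fintype.prod_ite_eq', ← funext_iff]
  simp

lemma schmidtRank_set_nonempty {d n : ℕ} [NeZero d] (hn : 1 ≤ n) (ψ : (Fin n → ZMod d) → ℂ) :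
    {R : ℕ | ∃ f : Fin R → Fin n → ZMod d → ℂ, ∀ x, ψ x = ∑ i, ∏ j, f i j (x j)}.Nonempty := by
  obtain ⟨g, hg⟩ := exists_sum_prod_eq ⟨0, hn⟩ ψ
  let e := Fintype.equivFin (Fin n → ZMod d)
  refine ⟨Fintype.card (Fin n → ZMod d), fun i => g (e.symm i), fun x => ?_⟩
  rw [hg, ← e.symm.sum_comp]

theorem rank_reshaping_le_schmidtRank
    (d n : ℕ) [NeZero d] (hn : 1 ≤ n)
    (ψ : (Fin n → ZMod d) → ℂ) (A : Finset (Fin n)) :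
    Matrix.rank (Matrix.of fun (a : {u // u ∈ A} → ZMod d) (b : {u // u ∈ Aᶜ} → ZMod d) =>
        ψ fun j => if h : j ∈ A then a ⟨j, h⟩ else b ⟨j, Finset.mem_compl.mpr h⟩)
      ≤ schmidtRank ψ := by
  obtain ⟨f, hf⟩ := Nat.sInf_mem (schmidtRank_set_nonempty hn ψ)
  exact rank_bipartiteReshaping_le A hf
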